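/- arXiv:2110.06540 — 7 statements merged into one kernel-verified Lean document; each statement's English description precedes it below -/
import Mathlib

section
/- Let {A, B} be an adjoint pair on a Hilbert space H (i.e., A ⊆ B* and B ⊆ A*) and suppose there is a closed operator R with bounded everywhere-defined inverse R⁻¹ ∈ B(H) such that A ⊆ R ⊆ B* and B ⊆ R* ⊆ A*. Then for x₀ ∈ D(A), v ∈ N(B*), u ∈ N(A*), the vector x₀ + (R*)⁻¹v + u lies in D(A*) and A*(x₀ + (R*)⁻¹v + u) = Bx₀ + v. -/
open LinearPMap

variable {H : Type*} [NormedAddCommGroup H] [InnerProductSpace ℂ H] [CompleteSpace H]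

local notation "⟪" x ", " y "⟫" => @inner ℂ _ _ x y

/-- Vishik formula: Let `{A, B}` be an adjoint pair (`A ⊆ B*`, `B ⊆ A*`)
and `R` a closed operator with bounded everywhere-defined inverse `R⁻¹` (and `(R*)⁻¹`),
`A ⊆ R ⊆ B*`, `B ⊆ R* ⊆ A*`. Then for `x₀ ∈ D(B)`, `v ∈ N(B*)`, `u ∈ N(A*)`,
the vector `x₀ + (R*)⁻¹v + u` lies in `D(A*)` and `A*(x₀ + (R*)⁻¹v + u) = Bx₀ + v`. -/
theorem vishik_adjoint_formula (A B R : H →ₗ.[ℂ] H)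
    (hA : Dense (A.domain : Set H)) (hB : Dense (B.domain : Set H))
    (hAB : A ≤ B†) (hBA : B ≤ A†)
    (hRclosed : R.IsClosed)
    (Rinv Rsinv : H →L[ℂ] H)
    (hRinv : ∀ y : H, (Rinv y, y) ∈ R.graph)
    (hRinv' : ∀ x : R.domain, Rinv (R x) = (x : H))
    (hRsinv : ∀ y : H, (Rsinv y, y) ∈ (R†).graph)
    (hRsinv' : ∀ x : (R†).domain, Rsinv ((R†) x) = (x : H))
    (hAR : A ≤ R) (hRB : R ≤ B†) (hBRs : B ≤ R†) (hRsA : R† ≤ A†)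
    (x₀ : H) (hx₀ : x₀ ∈ B.domain)
    (v : H) (hv : (v, (0 : H)) ∈ (B†).graph)
    (u : H) (hu : (u, (0 : H)) ∈ (A†).graph) :
    (x₀ + Rsinv v + u, B ⟨x₀, hx₀⟩ + v) ∈ (A†).graph := by
  have h1 : (x₀, B ⟨x₀, hx₀⟩) ∈ (A†).graph :=
    le_graph_of_le hBA (B.mem_graph ⟨x₀, hx₀⟩)
  have h2 : (Rsinv v, v) ∈ (A†).graph := le_graph_of_le hRsA (hRsinv v)
  have := Submodule.add_mem _ (Submodule.add_mem _ h1 h2) hu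
  simpa using this
end

section
/- Let {A, B} be an adjoint pair with A ⊆ R ⊆ B*, B ⊆ R* ⊆ A*, where R, R* have bounded inverses. For x = x₀ + (R*)⁻¹v₁ + u₁ ∈ D(A*) and y = y₀ + R⁻¹u₂ + v₂ ∈ D(B*) (with x₀ ∈ D(B), y₀ ∈ D(A), u₁, u₂ ∈ N(A*), v₁, v₂ ∈ N(B*)), one has ⟨A*x, y⟩ − ⟨x, B*y⟩ = ⟨v₁, v₂⟩ − ⟨u₁, u₂⟩. -/
open LinearPMap

variable {H : Type*} [NormedAddCommGroup H] [InnerProductSpace ℂ H] [CompleteSpace H]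

local notation "⟪" x ", " y "⟫" => @inner ℂ _ _ x y

private lemma vishik_pairing {T : H →ₗ.[ℂ] H} (hT : Dense (T.domain : Set H)) {p q : H}
    (h : (p, q) ∈ (T†).graph) (t : T.domain) : ⟪q, (t : H)⟫ = ⟪p, T t⟫ := by
  rw [LinearPMap.mem_graph_iff] at h
  obtain ⟨p', hp1, hp2⟩ := h
  simp only at hp1 hp2
  rw [← hp1, ← hp2]
  exact adjoint_isFormalAdjoint hT p' t

/-- In the Vishik setting, for `x = x₀ + (R*)⁻¹v₁ + u₁ ∈ D(A*)` and
`y = y₀ + R⁻¹u₂ + v₂ ∈ D(B*)` (with `x₀ ∈ D(B)`, `y₀ ∈ D(A)`, `u₁, u₂ ∈ N(A*)`,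
`v₁, v₂ ∈ N(B*)`), one has `⟪A*x, y⟫ − ⟪x, B*y⟫ = ⟪v₁, v₂⟫ − ⟪u₁, u₂⟫`. -/
theorem vishik_boundary_form (A B R : H →ₗ.[ℂ] H)
    (hA : Dense (A.domain : Set H)) (hB : Dense (B.domain : Set H))
    (hAB : A ≤ B†) (hBA : B ≤ A†)
    (hRclosed : R.IsClosed)
    (Rinv Rsinv : H →L[ℂ] H)
    (hRinv : ∀ y : H, (Rinv y, y) ∈ R.graph)
    (hRinv' : ∀ x : R.domain, Rinv (R x) = (x : H))
    (hRsinv : ∀ y : H, (Rsinv y, y) ∈ (R†).graph)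
    (hRsinv' : ∀ x : (R†).domain, Rsinv ((R†) x) = (x : H))
    (hAR : A ≤ R) (hRB : R ≤ B†) (hBRs : B ≤ R†) (hRsA : R† ≤ A†)
    (x₀ : H) (hx₀ : x₀ ∈ B.domain) (y₀ : H) (hy₀ : y₀ ∈ A.domain)
    (u₁ u₂ v₁ v₂ : H)
    (hu₁ : (u₁, (0 : H)) ∈ (A†).graph) (hu₂ : (u₂, (0 : H)) ∈ (A†).graph)
    (hv₁ : (v₁, (0 : H)) ∈ (B†).graph) (hv₂ : (v₂, (0 : H)) ∈ (B†).graph)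
    (x : (A†).domain) (hx : (x : H) = x₀ + Rsinv v₁ + u₁)
    (y : (B†).domain) (hy : (y : H) = y₀ + Rinv u₂ + v₂) :
    ⟪(A†) x, (y : H)⟫ - ⟪(x : H), (B†) y⟫ = ⟪v₁, v₂⟫ - ⟪u₁, u₂⟫ := by
  have hR : Dense (R.domain : Set H) := hA.mono hAR.1
  set x₀' : B.domain := ⟨x₀, hx₀⟩
  set y₀' : A.domain := ⟨y₀, hy₀⟩
  set w : H := Rsinv v₁ with hw_def
  set z : H := Rinv u₂ with hz_def
  set b : H := B x₀' with hb_def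
  set a : H := A y₀' with ha_def
  -- graph memberships in (A†).graph
  have hgx₀ : (x₀, b) ∈ (A†).graph := le_graph_of_le hBA (B.mem_graph x₀')
  have hgw : (w, v₁) ∈ (A†).graph := le_graph_of_le hRsA (hRsinv v₁)
  -- graph memberships in (B†).graph
  have hgy₀ : (y₀, a) ∈ (B†).graph := le_graph_of_le hAB (A.mem_graph y₀')
  have hgz : (z, u₂) ∈ (B†).graph := le_graph_of_le hRB (hRinv u₂)
  -- values of A† x and B† y
  have hgx : ((x : H), b + v₁) ∈ (A†).graph := by
    have h := (A†).graph.add_mem ((A†).graph.add_mem hgx₀ hgw) hu₁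
    simpa [hx, Prod.ext_iff] using h
  have hAx : (A†) x = b + v₁ :=
    (A†).mem_graph_snd_inj ((A†).mem_graph x) hgx rfl
  have hgy : ((y : H), a + u₂) ∈ (B†).graph := by
    have h := (B†).graph.add_mem ((B†).graph.add_mem hgy₀ hgz) hv₂
    simpa [hy, Prod.ext_iff] using h
  have hBy : (B†) y = a + u₂ :=
    (B†).mem_graph_snd_inj ((B†).mem_graph y) hgy rfl
  -- pairings
  have h1 : ⟪b, y₀⟫ = ⟪x₀, a⟫ := vishik_pairing hA hgx₀ y₀'
  have h2 : ⟪b, z⟫ = ⟪x₀, u₂⟫ := by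
    have h := vishik_pairing hB hgz x₀'
    rw [← inner_conj_symm, ← h, inner_conj_symm]
  have h3 : ⟪b, v₂⟫ = 0 := by
    have h := vishik_pairing hB hv₂ x₀'
    rw [← inner_conj_symm, ← h]
    simp
  have h4 : ⟪v₁, y₀⟫ = ⟪w, a⟫ := by
    have hy₀R : y₀ ∈ R.domain := hAR.1 hy₀
    have hval : A y₀' = R ⟨y₀, hy₀R⟩ := hAR.2 rfl
    have h := vishik_pairing hR (hRsinv v₁) ⟨y₀, hy₀R⟩
    rw [ha_def, hval]
    exact h
  have h5 : ⟪v₁, z⟫ = ⟪w, u₂⟫ := by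
    obtain ⟨z', hz1, hz2⟩ := (R.mem_graph_iff).mp (hRinv u₂)
    simp only at hz1 hz2
    have h := vishik_pairing hR (hRsinv v₁) z'
    rw [hz_def, ← hz1, ← hz2]
    exact h
  have h6 : ⟪u₁, a⟫ = 0 := by
    have h := vishik_pairing hA hu₁ y₀'
    rw [ha_def, ← h]
    simp
  rw [hAx, hBy, hx, hy]
  simp only [inner_add_left, inner_add_right, h1, h2, h3, h4, h5, h6]
  ring
end

section
/- Let {A, B} be an adjoint pair with B closed, formally normal, D(A) = D(B), 0 a regular point for A and B, and R as in the Vishik theorem. Let C ⊆ K = N(A*) ⊕ N(B*) be a closed subspace and T_C := A* restricted to D(T_C) = {x₀ + (R*)⁻¹v₁ + u₁ : x₀ ∈ D(B), (u₁, v₁) ∈ C}, and S_{C'} := B* restricted to D(S_{C'}) = {y₀ + R⁻¹u₂ + v₂ : y₀ ∈ D(A), (u₂, v₂) ∈ C'}. Then ⟨T_C x, y⟩ = ⟨x, S_{C'} y⟩ for all x ∈ D(T_C), y ∈ D(S_{C'}). -/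
open LinearPMap

variable {H : Type*} [NormedAddCommGroup H] [InnerProductSpace ℂ H] [CompleteSpace H]

local notation "⟪" x ", " y "⟫" => @inner ℂ _ _ x y

private lemma of_mem_graph' {f : H →ₗ.[ℂ] H} {a b : H} (h : (a, b) ∈ f.graph) :
    ∃ ha : a ∈ f.domain, f ⟨a, ha⟩ = b := by
  rw [LinearPMap.mem_graph_iff] at h
  obtain ⟨z, hz1, hz2⟩ := h
  change (z : H) = a at hz1
  refine ⟨hz1 ▸ z.2, ?_⟩
  rw [show (⟨a, hz1 ▸ z.2⟩ : f.domain) = z from Subtype.ext hz1.symm]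
  exact hz2

/-- In the Vishik setting with `B` closed formally normal, `D(A) = D(B)`,
`0` regular for `A` and `B`, let `C` be a closed subspace of `K = N(A*) ⊕ N(B*)` and let
`T_C = A*↾{x₀ + (R*)⁻¹v₁ + u₁ : x₀ ∈ D(B), (u₁,v₁) ∈ C}` and
`S_{C'} = B*↾{y₀ + R⁻¹u₂ + v₂ : y₀ ∈ D(A), (u₂,v₂) ∈ C'}`. Then
`⟪T_C x, y⟫ = ⟪x, S_{C'} y⟫` for all `x ∈ D(T_C)`, `y ∈ D(S_{C'})`. -/
theorem TC_SCprime_formal_adjoint (A B R : H →ₗ.[ℂ] H)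
    (hA : Dense (A.domain : Set H)) (hB : Dense (B.domain : Set H))
    (hAB : A ≤ B†) (hBA : B ≤ A†)
    (hdom : A.domain = B.domain)
    (hBclosed : B.IsClosed)
    (hBsub : B.domain ≤ (B†).domain)
    (hBnorm : ∀ (x : H) (hx : x ∈ B.domain), ‖B ⟨x, hx⟩‖ = ‖(B†) ⟨x, hBsub hx⟩‖)
    (hAreg : ∃ γ : ℝ, 0 < γ ∧ ∀ x : A.domain, γ * ‖(x : H)‖ ≤ ‖A x‖)
    (hBreg : ∃ γ : ℝ, 0 < γ ∧ ∀ x : B.domain, γ * ‖(x : H)‖ ≤ ‖B x‖)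
    (hRclosed : R.IsClosed)
    (Rinv Rsinv : H →L[ℂ] H)
    (hRinv : ∀ y : H, (Rinv y, y) ∈ R.graph)
    (hRinv' : ∀ x : R.domain, Rinv (R x) = (x : H))
    (hRsinv : ∀ y : H, (Rsinv y, y) ∈ (R†).graph)
    (hRsinv' : ∀ x : (R†).domain, Rsinv ((R†) x) = (x : H))
    (hAR : A ≤ R) (hRB : R ≤ B†) (hBRs : B ≤ R†) (hRsA : R† ≤ A†)
    (C : Submodule ℂ (H × H)) (hCclosed : IsClosed (C : Set (H × H)))
    (hCker : ∀ p ∈ C, (p.1, (0 : H)) ∈ (A†).graph ∧ (p.2, (0 : H)) ∈ (B†).graph)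
    (x : (A†).domain) (y : (B†).domain)
    (x₀ : H) (hx₀ : x₀ ∈ B.domain) (u₁ v₁ : H) (h₁ : (u₁, v₁) ∈ C)
    (hx : (x : H) = x₀ + Rsinv v₁ + u₁)
    (y₀ : H) (hy₀ : y₀ ∈ A.domain) (u₂ v₂ : H)
    (h₂u : (u₂, (0 : H)) ∈ (A†).graph) (h₂v : (v₂, (0 : H)) ∈ (B†).graph)
    (h₂ : ∀ p ∈ C, ⟪p.2, v₂⟫ = ⟪p.1, u₂⟫)
    (hy : (y : H) = y₀ + Rinv u₂ + v₂) :
    ⟪(A†) x, (y : H)⟫ = ⟪(x : H), (B†) y⟫ := by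
  have hR : Dense (R.domain : Set H) := hA.mono hAR.1
  have adjA := A.adjoint_isFormalAdjoint hA
  have adjB := B.adjoint_isFormalAdjoint hB
  have adjR := R.adjoint_isFormalAdjoint hR
  -- decompose x
  obtain ⟨hRsd, hRsv⟩ := of_mem_graph' (hRsinv v₁)
  obtain ⟨hu₁d, hu₁v⟩ := of_mem_graph' (hCker _ h₁).1
  have hx₀A : x₀ ∈ (A†).domain := hBA.1 hx₀
  have hRsA' : Rsinv v₁ ∈ (A†).domain := hRsA.1 hRsd
  have hxdec : x = (⟨x₀, hx₀A⟩ : (A†).domain) + ⟨Rsinv v₁, hRsA'⟩ + ⟨u₁, hu₁d⟩ :=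
    Subtype.ext hx
  have hAx : (A†) x = B ⟨x₀, hx₀⟩ + v₁ := by
    rw [hxdec, LinearPMap.map_add, LinearPMap.map_add]
    rw [show (A†) ⟨x₀, hx₀A⟩ = B ⟨x₀, hx₀⟩ from (hBA.2 (x := ⟨x₀, hx₀⟩) (y := ⟨x₀, hx₀A⟩) rfl).symm,
      show (A†) ⟨Rsinv v₁, hRsA'⟩ = (R†) ⟨Rsinv v₁, hRsd⟩ from (hRsA.2 (x := ⟨Rsinv v₁, hRsd⟩) (y := ⟨Rsinv v₁, hRsA'⟩) rfl).symm,
      hRsv, hu₁v, add_zero]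
  -- decompose y
  obtain ⟨hRd, hRv⟩ := of_mem_graph' (hRinv u₂)
  obtain ⟨hv₂d, hv₂v⟩ := of_mem_graph' h₂v
  have hy₀B : y₀ ∈ (B†).domain := hAB.1 hy₀
  have hRB' : Rinv u₂ ∈ (B†).domain := hRB.1 hRd
  have hydec : y = (⟨y₀, hy₀B⟩ : (B†).domain) + ⟨Rinv u₂, hRB'⟩ + ⟨v₂, hv₂d⟩ :=
    Subtype.ext hy
  have hBy : (B†) y = A ⟨y₀, hy₀⟩ + u₂ := by
    rw [hydec, LinearPMap.map_add, LinearPMap.map_add]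
    rw [show (B†) ⟨y₀, hy₀B⟩ = A ⟨y₀, hy₀⟩ from (hAB.2 (x := ⟨y₀, hy₀⟩) (y := ⟨y₀, hy₀B⟩) rfl).symm,
      show (B†) ⟨Rinv u₂, hRB'⟩ = R ⟨Rinv u₂, hRd⟩ from (hRB.2 (x := ⟨Rinv u₂, hRd⟩) (y := ⟨Rinv u₂, hRB'⟩) rfl).symm,
      hRv, hv₂v, add_zero]
  -- six key identities
  have e1 : ⟪(B ⟨x₀, hx₀⟩ : H), y₀⟫ = ⟪x₀, (A ⟨y₀, hy₀⟩ : H)⟫ := by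
    have := adjA ⟨x₀, hx₀A⟩ ⟨y₀, hy₀⟩
    rw [show (A†) ⟨x₀, hx₀A⟩ = B ⟨x₀, hx₀⟩ from (hBA.2 (x := ⟨x₀, hx₀⟩) (y := ⟨x₀, hx₀A⟩) rfl).symm] at this
    exact this
  have e2 : ⟪(B ⟨x₀, hx₀⟩ : H), Rinv u₂⟫ = ⟪x₀, u₂⟫ := by
    have := adjB ⟨Rinv u₂, hRB'⟩ ⟨x₀, hx₀⟩
    rw [show (B†) ⟨Rinv u₂, hRB'⟩ = R ⟨Rinv u₂, hRd⟩ from (hRB.2 (x := ⟨Rinv u₂, hRd⟩) (y := ⟨Rinv u₂, hRB'⟩) rfl).symm, hRv] at this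
    calc ⟪(B ⟨x₀, hx₀⟩ : H), Rinv u₂⟫
        = starRingEnd ℂ ⟪(Rinv u₂ : H), (B ⟨x₀, hx₀⟩ : H)⟫ := (inner_conj_symm _ _).symm
      _ = starRingEnd ℂ ⟪u₂, x₀⟫ := by rw [← this]
      _ = ⟪x₀, u₂⟫ := inner_conj_symm _ _
  have e3 : ⟪(B ⟨x₀, hx₀⟩ : H), v₂⟫ = 0 := by
    have := adjB ⟨v₂, hv₂d⟩ ⟨x₀, hx₀⟩
    rw [hv₂v, inner_zero_left] at this
    calc ⟪(B ⟨x₀, hx₀⟩ : H), v₂⟫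
        = starRingEnd ℂ ⟪v₂, (B ⟨x₀, hx₀⟩ : H)⟫ := (inner_conj_symm _ _).symm
      _ = 0 := by rw [← this]; simp
  have e4 : ⟪v₁, y₀⟫ = ⟪Rsinv v₁, (A ⟨y₀, hy₀⟩ : H)⟫ := by
    have := adjR ⟨Rsinv v₁, hRsd⟩ ⟨y₀, hAR.1 hy₀⟩
    rw [hRsv, show R ⟨y₀, hAR.1 hy₀⟩ = A ⟨y₀, hy₀⟩ from (hAR.2 (x := ⟨y₀, hy₀⟩) (y := ⟨y₀, hAR.1 hy₀⟩) rfl).symm] at this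
    exact this
  have e5 : ⟪v₁, Rinv u₂⟫ = ⟪Rsinv v₁, u₂⟫ := by
    have := adjR ⟨Rsinv v₁, hRsd⟩ ⟨Rinv u₂, hRd⟩
    rw [hRsv, hRv] at this
    exact this
  have e6 : ⟪v₁, v₂⟫ = ⟪u₁, u₂⟫ := h₂ (u₁, v₁) h₁
  have e7 : ⟪u₁, (A ⟨y₀, hy₀⟩ : H)⟫ = 0 := by
    have := adjA ⟨u₁, hu₁d⟩ ⟨y₀, hy₀⟩
    rw [hu₁v, inner_zero_left] at this
    exact this.symm
  rw [hAx, hBy, hx, hy]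
  simp only [inner_add_left, inner_add_right]
  rw [e1, e2, e3, e4, e5, e6, e7]
  ring
end

section
/- Let B be a closed formally normal operator with A := B*↾D(B), and suppose T is a normal extension of B with B ⊆ T ⊆ A* and T* ⊆ B*. If x₀, y₀ ∈ D(B), v₁ ∈ N(B*), u₂ ∈ N(A*) are such that the same vector z ∈ D(T) = D(T*) satisfies Tz = Bx₀ + v₁ and T*z = Ay₀ + u₂, then using normality of T and formal normality of B one has B(x₀ − y₀) = 0. -/
open LinearPMap

variable {H : Type*} [NormedAddCommGroup H] [InnerProductSpace ℂ H] [CompleteSpace H]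

local notation "⟪" x ", " y "⟫" => @inner ℂ _ _ x y

/-- A densely defined closed operator `N` is normal if `D(N) = D(N*)` and
`‖Nz‖ = ‖N*z‖` on `D(N)`. -/
def IsNormalOp {H : Type*} [NormedAddCommGroup H] [InnerProductSpace ℂ H] [CompleteSpace H]
    (N : H →ₗ.[ℂ] H) : Prop :=
  Dense (N.domain : Set H) ∧ N.IsClosed ∧
    ∃ h : N.domain = (N†).domain,
      ∀ z : N.domain, ‖N z‖ = ‖(N†) ⟨(z : H), h ▸ z.2⟩‖

/-!
Write `w = x₀ - y₀ ∈ D(B)`. By polarization, normality of `T` gives `⟨Tz, Tw⟩ = ⟨T*z, T*w⟩`,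
where `Tw = Bw` and `T*w = B*w`. Since `ker B* ⟂ ran B` and `ker A* ⟂ ran A`, the components
`v₁` and `u₂` drop out, leaving `⟨Bx₀, Bw⟩ = ⟨B*y₀, B*w⟩`, and formal normality of `B` turns the
right side into `⟨By₀, Bw⟩`. Hence `‖Bw‖² = ⟨Bx₀ - By₀, Bw⟩ = 0`.
-/

section

variable {𝕜 E F : Type*} [RCLike 𝕜] [NormedAddCommGroup E] [InnerProductSpace 𝕜 E]
  [NormedAddCommGroup F] [InnerProductSpace 𝕜 F]

theorem LinearMap.inner_map_map_eq_of_norm_map_eq {D : Type*} [AddCommGroup D] [Module 𝕜 D]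
    (L₁ L₂ : D →ₗ[𝕜] E) (h : ∀ z, ‖L₁ z‖ = ‖L₂ z‖) (z w : D) :
    inner 𝕜 (L₁ z) (L₁ w) = inner 𝕜 (L₂ z) (L₂ w) := by
  rw [inner_eq_sum_norm_sq_div_four, inner_eq_sum_norm_sq_div_four]
  simp only [← _root_.map_add, ← _root_.map_sub, ← _root_.map_smul, h]

variable [CompleteSpace E]

namespace LinearPMap

theorem inner_eq_zero_of_mem_graph_adjoint {f : E →ₗ.[𝕜] F} (hf : Dense (f.domain : Set E))
    {v : F} (hv : (v, (0 : E)) ∈ f†.graph) (x : f.domain) : inner 𝕜 v (f x) = 0 := by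
  obtain ⟨v', rfl, hv'⟩ := (mem_graph_iff _).mp hv
  rw [← adjoint_isFormalAdjoint hf v' x, hv', inner_zero_left]

theorem inner_apply_eq_inner_adjoint_apply_of_norm_eq {f : E →ₗ.[𝕜] E}
    (hsub : f.domain ≤ f†.domain)
    (hnorm : ∀ x : f.domain, ‖f x‖ = ‖f† ⟨x, hsub x.2⟩‖) (x y : f.domain) :
    inner 𝕜 (f x) (f y) = inner 𝕜 (f† ⟨x, hsub x.2⟩) (f† ⟨y, hsub y.2⟩) :=
  LinearMap.inner_map_map_eq_of_norm_map_eq f.toFun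
    ((f†).toFun.comp (Submodule.inclusion hsub)) hnorm x y

theorem inner_apply_eq_inner_adjoint_apply_of_le {S T : E →ₗ.[𝕜] E}
    (hdom : T.domain ≤ T†.domain)
    (hnorm : ∀ x : T.domain, ‖T x‖ = ‖T† ⟨x, hdom x.2⟩‖)
    (hST : S ≤ T) (hTS : T† ≤ S†) (z : T.domain) (w : S.domain) :
    inner 𝕜 (T z) (S w) =
      inner 𝕜 (T† ⟨z, hdom z.2⟩) (S† ⟨w, hTS.1 (hdom (hST.1 w.2))⟩) := by
  have hTw : S w = T ⟨w, hST.1 w.2⟩ := hST.2 rfl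
  have hTsw : T† ⟨w, hdom (hST.1 w.2)⟩ = S† ⟨w, hTS.1 (hdom (hST.1 w.2))⟩ := hTS.2 rfl
  rw [hTw, ← hTsw]
  exact inner_apply_eq_inner_adjoint_apply_of_norm_eq hdom hnorm z _

end LinearPMap

end

theorem normality_forces_equal_components_general (B T : H →ₗ.[ℂ] H)
    (hB : Dense (B.domain : Set H))
    (hBsub : B.domain ≤ (B†).domain)
    (hBnorm : ∀ (x : H) (hx : x ∈ B.domain), ‖B ⟨x, hx⟩‖ = ‖(B†) ⟨x, hBsub hx⟩‖)
    (hT : IsNormalOp T) (hBT : B ≤ T)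
    (hTsB : T† ≤ B†)
    (x₀ : B.domain) (y₀ : ((B†).domRestrict B.domain).domain)
    (v₁ u₂ : H)
    (hv₁ : (v₁, (0 : H)) ∈ (B†).graph)
    (hu₂ : (u₂, (0 : H)) ∈ (((B†).domRestrict B.domain)†).graph)
    (z : T.domain)
    (hTz : T z = B x₀ + v₁)
    (hTsz : ((z : H), ((B†).domRestrict B.domain) y₀ + u₂) ∈ (T†).graph) :
    ((x₀ : H) - (y₀ : H), (0 : H)) ∈ B.graph := by
  obtain ⟨-, -, hdom, hTnorm⟩ := hT
  have hAdense : Dense ((((B†).domRestrict B.domain).domain : Submodule ℂ H) : Set H) := by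
    rwa [domRestrict_domain, inf_eq_left.mpr hBsub]
  let y₀' : B.domain := ⟨y₀, y₀.2.1⟩
  let w : B.domain := x₀ - y₀'
  have hAy₀ : (B†).domRestrict B.domain y₀ = B† ⟨y₀, hBsub y₀.2.1⟩ := domRestrict_apply rfl
  have hTsz' : T† ⟨z, hdom.le z.2⟩ = B† ⟨y₀, hBsub y₀.2.1⟩ + u₂ := by
    rw [← hAy₀]; exact ((image_iff _).mpr hTsz).symm
  have hu₂w : ⟪u₂, B† ⟨w, hBsub w.2⟩⟫ = 0 := by
    have hAw : (B†).domRestrict B.domain ⟨w, w.2, hBsub w.2⟩ = B† ⟨w, hBsub w.2⟩ :=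
      domRestrict_apply rfl
    rw [← hAw]
    exact inner_eq_zero_of_mem_graph_adjoint hAdense hu₂ _
  have hnormal := inner_apply_eq_inner_adjoint_apply_of_le hdom.le hTnorm hBT hTsB z w
  rw [hTz, hTsz', inner_add_left, inner_add_left,
    inner_eq_zero_of_mem_graph_adjoint hB hv₁, hu₂w, add_zero, add_zero,
    ← inner_apply_eq_inner_adjoint_apply_of_norm_eq hBsub (fun x ↦ hBnorm x x.2) y₀' w] at hnormal
  have hBw : ⟪B w, B w⟫ = 0 :=
    calc ⟪B w, B w⟫ = ⟪B x₀ - B y₀', B w⟫ := by rw [← LinearPMap.map_sub]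
      _ = 0 := by rw [inner_sub_left, hnormal, sub_self]
  exact (mem_graph_iff _).mpr ⟨w, rfl, inner_self_eq_zero.mp hBw⟩

/-- Let `B` be closed formally normal, `A := B*↾D(B)`, and `T` a normal
extension of `B` with `B ⊆ T ⊆ A*` and `T* ⊆ B*`. If `x₀, y₀ ∈ D(B)`, `v₁ ∈ N(B*)`,
`u₂ ∈ N(A*)` and `z ∈ D(T) = D(T*)` satisfy `Tz = Bx₀ + v₁` and `T*z = Ay₀ + u₂`,
then `B(x₀ − y₀) = 0`. -/
theorem normality_forces_equal_components (B T : H →ₗ.[ℂ] H)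
    (hB : Dense (B.domain : Set H)) (hBclosed : B.IsClosed)
    (hBsub : B.domain ≤ (B†).domain)
    (hBnorm : ∀ (x : H) (hx : x ∈ B.domain), ‖B ⟨x, hx⟩‖ = ‖(B†) ⟨x, hBsub hx⟩‖)
    (hT : IsNormalOp T) (hBT : B ≤ T) (hTA : T ≤ ((B†).domRestrict B.domain)†)
    (hTsB : T† ≤ B†)
    (x₀ : B.domain) (y₀ : ((B†).domRestrict B.domain).domain)
    (v₁ u₂ : H)
    (hv₁ : (v₁, (0 : H)) ∈ (B†).graph)
    (hu₂ : (u₂, (0 : H)) ∈ (((B†).domRestrict B.domain)†).graph)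
    (z : T.domain)
    (hTz : T z = B x₀ + v₁)
    (hTsz : ((z : H), ((B†).domRestrict B.domain) y₀ + u₂) ∈ (T†).graph) :
    ((x₀ : H) - (y₀ : H), (0 : H)) ∈ B.graph :=
  normality_forces_equal_components_general B T hB hBsub hBnorm hT hBT hTsB x₀ y₀ v₁ u₂ hv₁ hu₂ z
    hTz hTsz
end

section
/- Let R be an unbounded normal operator with bounded inverse and polar decomposition R = U|R| where U is unitary. Let A ⊆ R, B ⊆ R* be restrictions to a common dense domain D(A) = D(B), and set T := |R|↾D(A). Then N(A*) = U·N(T*) and N(B*) = U*·N(T*). -/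
open LinearPMap

variable {H : Type*} [NormedAddCommGroup H] [InnerProductSpace ℂ H] [CompleteSpace H]

local notation "⟪" x ", " y "⟫" => @inner ℂ _ _ x y

/-- Membership of `(x, 0)` in the graph of the adjoint of a densely defined operator is
equivalent to orthogonality of `x` to the range. -/
lemma mem_ker_adjoint_iff (S : H →ₗ.[ℂ] H) (hS : Dense (S.domain : Set H)) (x : H) :
    (x, (0 : H)) ∈ (S†).graph ↔ ∀ z : S.domain, ⟪x, S z⟫ = 0 := by
  constructor
  · intro hx z
    rcases (mem_graph_iff _).mp hx with ⟨y, hy1, hy2⟩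
    have h := adjoint_isFormalAdjoint hS y z
    rw [hy2] at h
    simp only at hy1
    rw [hy1] at h
    simpa using h.symm
  · intro h
    have hx : x ∈ (S†).domain :=
      mem_adjoint_domain_of_exists (T := S) x ⟨0, fun z => by simp [h z]⟩
    have hv : (S†) ⟨x, hx⟩ = 0 :=
      adjoint_apply_eq hS ⟨x, hx⟩ (fun z => by simp [h z])
    exact (mem_graph_iff _).mpr ⟨⟨x, hx⟩, rfl, hv⟩

/-- If pointwise `S₁ = V ∘ S₂` on a common domain, the orthogonality conditions
transform under `V`. -/
lemma key_iff (S₁ S₂ : H →ₗ.[ℂ] H) (V : H ≃ₗᵢ[ℂ] H)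
    (hdom : S₁.domain = S₂.domain)
    (happ : ∀ (z₁ : S₁.domain) (z₂ : S₂.domain), (z₁ : H) = (z₂ : H) → S₁ z₁ = V (S₂ z₂))
    (x : H) :
    (∀ z : S₁.domain, ⟪x, S₁ z⟫ = 0) ↔ ∀ z : S₂.domain, ⟪V.symm x, S₂ z⟫ = 0 := by
  constructor
  · intro h z
    have hz1 : (z : H) ∈ S₁.domain := by rw [hdom]; exact z.2
    have hx := h ⟨z, hz1⟩
    rw [happ ⟨z, hz1⟩ z rfl] at hx
    rw [← V.inner_map_map (V.symm x) (S₂ z), V.apply_symm_apply]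
    exact hx
  · intro h z
    have hz2 : (z : H) ∈ S₂.domain := by rw [← hdom]; exact z.2
    have hx := h ⟨z, hz2⟩
    rw [happ z ⟨z, hz2⟩ rfl, ← V.apply_symm_apply x, V.inner_map_map]
    exact hx

/-- The kernel of the adjoint transforms under the unitary relating two operators. -/
lemma ker_adj_image (S₁ S₂ : H →ₗ.[ℂ] H) (V : H ≃ₗᵢ[ℂ] H)
    (h₁ : Dense (S₁.domain : Set H)) (h₂ : Dense (S₂.domain : Set H))
    (key : ∀ x : H, (∀ z : S₁.domain, ⟪x, S₁ z⟫ = 0) ↔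
      ∀ z : S₂.domain, ⟪V.symm x, S₂ z⟫ = 0) :
    {x : H | (x, (0 : H)) ∈ (S₁†).graph} = ⇑V '' {x : H | (x, (0 : H)) ∈ (S₂†).graph} := by
  ext x
  simp only [Set.mem_setOf_eq, Set.mem_image, mem_ker_adjoint_iff _ h₁]
  rw [key]
  constructor
  · intro h
    exact ⟨V.symm x, (mem_ker_adjoint_iff _ h₂ _).mpr h, by simp⟩
  · rintro ⟨y, hy, rfl⟩
    intro z
    simpa using (mem_ker_adjoint_iff _ h₂ _).mp hy z

/-- Let `R` be an unbounded normal operator with bounded inverse and polar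
decomposition `R = U|R|` (`U` unitary, `M = |R|` positive symmetric, commuting with `U`).
Let `A ⊆ R`, `B ⊆ R*` be the restrictions to a common dense domain `D = D(A) = D(B)` and
`T := |R|↾D`. Then `N(A*) = U·N(T*)` and `N(B*) = U*·N(T*)`. -/
theorem polar_kernels (R M : H →ₗ.[ℂ] H) (U : H ≃ₗᵢ[ℂ] H)
    (hRdense : Dense (R.domain : Set H)) (hRclosed : R.IsClosed) (hRnormal : IsNormalOp R)
    (Rinv Rsinv : H →L[ℂ] H)
    (hRinv : ∀ y : H, (Rinv y, y) ∈ R.graph)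
    (hRinv' : ∀ x : R.domain, Rinv (R x) = (x : H))
    (hRsinv : ∀ y : H, (Rsinv y, y) ∈ (R†).graph)
    (hRsinv' : ∀ x : (R†).domain, Rsinv ((R†) x) = (x : H))
    (hMdom : M.domain = R.domain)
    (hRM : ∀ x y : H, (x, y) ∈ M.graph ↔ (x, U y) ∈ R.graph)
    (hMsym : ∀ x y : M.domain, ⟪M x, (y : H)⟫ = ⟪(x : H), M y⟫)
    (hMpos : ∀ x : M.domain, 0 ≤ (⟪M x, (x : H)⟫).re)
    (hUM : ∀ x y : H, (x, y) ∈ M.graph → (U x, U y) ∈ M.graph)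
    (D : Submodule ℂ H) (hDdense : Dense (D : Set H)) (hD : D ≤ R.domain) :
    {x : H | (x, (0 : H)) ∈ ((R.domRestrict D)†).graph} =
        ⇑U '' {x : H | (x, (0 : H)) ∈ ((M.domRestrict D)†).graph} ∧
      {x : H | (x, (0 : H)) ∈ (((R†).domRestrict D)†).graph} =
        ⇑U.symm '' {x : H | (x, (0 : H)) ∈ ((M.domRestrict D)†).graph} := by
  have hDM : D ≤ M.domain := by rw [hMdom]; exact hD
  -- functionality of graphs
  have hRfun : ∀ (x y : H) (hx : x ∈ R.domain), (x, y) ∈ R.graph → R ⟨x, hx⟩ = y := by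
    intro x y hx hxy
    rcases (mem_graph_iff _).mp hxy with ⟨t, ht1, ht2⟩
    simp only at ht1 ht2
    have : t = ⟨x, hx⟩ := Subtype.ext ht1
    rwa [this] at ht2
  -- R = U ∘ M on M.domain
  have hval : ∀ xM : M.domain, ∃ hx : (xM : H) ∈ R.domain, R ⟨xM, hx⟩ = U (M xM) := by
    intro xM
    have hg : ((xM : H), U (M xM)) ∈ R.graph := (hRM xM (M xM)).mp (mem_graph M xM)
    have hx : (xM : H) ∈ R.domain := by rw [← hMdom]; exact xM.2
    exact ⟨hx, hRfun _ _ hx hg⟩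
  -- R† = U⁻¹ ∘ M on M.domain
  have hadj : ∀ zM : M.domain,
      ∃ hz : (zM : H) ∈ (R†).domain, (R†) ⟨zM, hz⟩ = U.symm (M zM) := by
    intro zM
    have hprop : ∀ x : R.domain, ⟪U.symm (M zM), (x : H)⟫ = ⟪(zM : H), R x⟫ := by
      intro x
      have hxM : (x : H) ∈ M.domain := by rw [hMdom]; exact x.2
      obtain ⟨hx, hRx⟩ := hval ⟨x, hxM⟩
      have hUx : ((U x : H), U (M ⟨x, hxM⟩)) ∈ M.graph := hUM _ _ (mem_graph M ⟨x, hxM⟩)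
      rcases (mem_graph_iff _).mp hUx with ⟨t, ht1, ht2⟩
      simp only at ht1 ht2
      calc ⟪U.symm (M zM), (x : H)⟫
          = ⟪M zM, U x⟫ := by
            rw [← U.inner_map_map (U.symm (M zM)) (x : H), U.apply_symm_apply]
        _ = ⟪(zM : H), M t⟫ := by rw [← ht1]; exact hMsym zM t
        _ = ⟪(zM : H), R x⟫ := by rw [ht2, ← hRx]
    have hz : (zM : H) ∈ (R†).domain :=
      mem_adjoint_domain_of_exists (T := R) _ ⟨U.symm (M zM), hprop⟩
    exact ⟨hz, adjoint_apply_eq hRdense ⟨_, hz⟩ hprop⟩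
  have hDRs : D ≤ (R†).domain := fun x hx => (hadj ⟨x, hDM hx⟩).1
  -- densities
  have h₁ : Dense (((R.domRestrict D).domain : Submodule ℂ H) : Set H) := by
    rw [domRestrict_domain, inf_eq_left.mpr hD]; exact hDdense
  have h₂ : Dense (((M.domRestrict D).domain : Submodule ℂ H) : Set H) := by
    rw [domRestrict_domain, inf_eq_left.mpr hDM]; exact hDdense
  have h₃ : Dense ((((R†).domRestrict D).domain : Submodule ℂ H) : Set H) := by
    rw [domRestrict_domain, inf_eq_left.mpr hDRs]; exact hDdense
  -- domain equalities
  have hdomAT : (R.domRestrict D).domain = (M.domRestrict D).domain := by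
    rw [domRestrict_domain, domRestrict_domain, hMdom]
  have hdomBT : ((R†).domRestrict D).domain = (M.domRestrict D).domain := by
    rw [domRestrict_domain, domRestrict_domain, inf_eq_left.mpr hDRs, inf_eq_left.mpr hDM]
  -- pointwise relations
  have happAT : ∀ (z₁ : (R.domRestrict D).domain) (z₂ : (M.domRestrict D).domain),
      (z₁ : H) = (z₂ : H) → R.domRestrict D z₁ = U (M.domRestrict D z₂) := by
    intro z₁ z₂ hz
    have hz2M : (z₂ : H) ∈ M.domain := z₂.2.2
    have hTz : M.domRestrict D z₂ = M ⟨z₂, hz2M⟩ := domRestrict_apply rfl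
    obtain ⟨hx, hRv⟩ := hval ⟨z₂, hz2M⟩
    have hAz : R.domRestrict D z₁ = R ⟨(z₂ : H), hx⟩ := domRestrict_apply hz
    rw [hAz, hRv, hTz]
  have happBT : ∀ (z₁ : ((R†).domRestrict D).domain) (z₂ : (M.domRestrict D).domain),
      (z₁ : H) = (z₂ : H) → (R†).domRestrict D z₁ = U.symm (M.domRestrict D z₂) := by
    intro z₁ z₂ hz
    have hz2M : (z₂ : H) ∈ M.domain := z₂.2.2
    have hTz : M.domRestrict D z₂ = M ⟨z₂, hz2M⟩ := domRestrict_apply rfl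
    obtain ⟨hz', hRv⟩ := hadj ⟨z₂, hz2M⟩
    have hBz : (R†).domRestrict D z₁ = (R†) ⟨(z₂ : H), hz'⟩ := domRestrict_apply hz
    rw [hBz, hRv, hTz]
  exact ⟨ker_adj_image _ _ U h₁ h₂ (key_iff _ _ U hdomAT happAT),
    ker_adj_image _ _ U.symm h₃ h₂ (key_iff _ _ U.symm hdomBT happBT)⟩
end

section
/- Let Z be a bounded injective normal operator on H whose (normal, closed) inverse R := Z⁻¹ is unbounded, and let U be a closed subspace with U ∩ D(R) = {0}, with orthogonal projection P onto U. Define A := R↾D(A), B := R*↾D(B) with D(A) = D(B) := Z(I − P)H. Then A and B are densely defined closed formally normal operators forming an adjoint pair, 0 is a regular point for both, and N(A*) = U, N(B*) = W*U where W is the unitary with WR* = R. -/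
/-!
Both graphs are parametrized by `𝒰ᗮ`: `Aop = {(Z a, a)}` and `Bop = {(Z a, W⁻¹ a)}`, `a ∈ 𝒰ᗮ`;
the second because `Z* = Z W` gives `⟪W⁻¹ u, Z a⟫ = ⟪Z u, a⟫`, i.e. `(Z u, W⁻¹ u) ∈ R*`. For a
graph `{(T a, V a) | a ∈ K}` with `T` bounded and `V` unitary, closedness comes from that of `K`,
the lower bound from `‖T a‖ ≤ ‖T‖ ‖V a‖`, and `N(S*) = (ran S)ᗮ = V Kᗮ`. The same inner product
identity makes `Aop` and `Bop` formally adjoint, and `‖a‖ = ‖W⁻¹ a‖` makes them formally normal.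
Density of `Z 𝒰ᗮ` is where `𝒰 ∩ D(R) = {0}` enters: if `y ⊥ Z 𝒰ᗮ` then
`Z* y ∈ 𝒰 ∩ ran Z* = 𝒰 ∩ ran Z`, so `Z* y = 0` and `y = 0`.
-/

open LinearPMap

variable {H : Type*} [NormedAddCommGroup H] [InnerProductSpace ℂ H] [CompleteSpace H]

local notation "⟪" x ", " y "⟫" => @inner ℂ _ _ x y

/-- `A` is formally normal: densely defined, `D(A) ⊆ D(A*)` and `‖Ax‖ = ‖A*x‖` on `D(A)`. -/
def FormallyNormal {H : Type*} [NormedAddCommGroup H] [InnerProductSpace ℂ H]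
    [CompleteSpace H] (A : H →ₗ.[ℂ] H) : Prop :=
  Dense (A.domain : Set H) ∧
    ∃ h : A.domain ≤ (A†).domain,
      ∀ x : A.domain, ‖A x‖ = ‖(A†) ⟨(x : H), h x.2⟩‖

open scoped InnerProductSpace

theorem Submodule.mem_map_prod_iff {R M M₁ M₂ : Type*} [Semiring R] [AddCommMonoid M]
    [AddCommMonoid M₁] [AddCommMonoid M₂] [Module R M] [Module R M₁] [Module R M₂]
    {K : Submodule R M} {f : M →ₗ[R] M₁} {g : M →ₗ[R] M₂} {p : M₁ × M₂} :
    p ∈ K.map (f.prod g) ↔ ∃ a ∈ K, f a = p.1 ∧ g a = p.2 := by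
  simp [Prod.ext_iff]

namespace ContinuousLinearMap

variable {𝕜 E G : Type*} [RCLike 𝕜]
  [NormedAddCommGroup E] [InnerProductSpace 𝕜 E]
  [NormedAddCommGroup G] [InnerProductSpace 𝕜 G]

theorem dense_map_of_orthogonal_inf_range_adjoint_eq_bot [CompleteSpace E] [CompleteSpace G]
    (T : G →L[𝕜] E) (K : Submodule 𝕜 G) (hinj : Function.Injective (adjoint T))
    (hK : Kᗮ ⊓ LinearMap.range (adjoint T : E →ₗ[𝕜] G) = ⊥) :
    Dense (K.map (T : G →ₗ[𝕜] E) : Set E) := by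
  rw [Submodule.dense_iff_topologicalClosure_eq_top, Submodule.topologicalClosure_eq_top_iff,
    Submodule.eq_bot_iff]
  intro y hy
  have hTy : adjoint T y ∈ Kᗮ := fun a ha => by
    rw [adjoint_inner_right]
    exact hy _ (Submodule.mem_map_of_mem ha)
  have hTy0 : adjoint T y = 0 := by
    rw [← Submodule.mem_bot 𝕜, ← hK]
    exact ⟨hTy, LinearMap.mem_range_self _ y⟩
  exact hinj (hTy0.trans (_root_.map_zero _).symm)

theorem range_comp_id_sub_starProjection (T : G →L[𝕜] E) (U : Submodule 𝕜 G)
    [U.HasOrthogonalProjection] :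
    LinearMap.range (T.comp (ContinuousLinearMap.id 𝕜 G - U.starProjection) : G →ₗ[𝕜] E) =
      Uᗮ.map (T : G →ₗ[𝕜] E) := by
  rw [toLinearMap_comp, LinearMap.range_comp, ← Submodule.starProjection_orthogonal,
    Submodule.range_starProjection]

end ContinuousLinearMap

namespace LinearPMap

variable {𝕜 E F G : Type*} [RCLike 𝕜]
  [NormedAddCommGroup E] [InnerProductSpace 𝕜 E]
  [NormedAddCommGroup F] [InnerProductSpace 𝕜 F]
  [NormedAddCommGroup G] [InnerProductSpace 𝕜 G]

theorem mem_graph_domRestrict_iff {f : E →ₗ.[𝕜] F} {S : Submodule 𝕜 E} {p : E × F} :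
    p ∈ (f.domRestrict S).graph ↔ p.1 ∈ S ∧ p ∈ f.graph := by
  simp only [mem_graph_iff]
  constructor
  · rintro ⟨x, hx, hfx⟩
    exact ⟨hx ▸ x.2.1, ⟨x, x.2.2⟩, hx, (domRestrict_apply rfl).symm.trans hfx⟩
  · rintro ⟨hS, x, hx, hfx⟩
    exact ⟨⟨x, hx ▸ hS, x.2⟩, hx, (domRestrict_apply rfl).trans hfx⟩

theorem adjoint_ker_eq_orthogonal_range [CompleteSpace E] {S : E →ₗ.[𝕜] F}
    (hS : Dense (S.domain : Set E)) :
    {y : F | (y, 0) ∈ S†.graph} = ((LinearMap.range S.toFun)ᗮ : Set F) := by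
  ext y
  simp only [Set.mem_ofPred_eq, mem_graph_iff, SetLike.mem_coe, Submodule.mem_orthogonal',
    LinearMap.mem_range, forall_exists_index, forall_apply_eq_imp_iff]
  constructor
  · rintro ⟨v, rfl, hv⟩ x
    change ⟪(v : F), S x⟫_𝕜 = 0
    rw [← adjoint_isFormalAdjoint hS v x, hv, inner_zero_left]
  · intro h
    have hF : ∀ x : S.domain, ⟪(0 : E), (x : E)⟫_𝕜 = ⟪y, S x⟫_𝕜 := fun x => by
      rw [inner_zero_left]; exact (h x).symm
    exact ⟨⟨y, mem_adjoint_domain_of_exists _ ⟨0, hF⟩⟩, rfl, adjoint_apply_eq hS _ hF⟩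

theorem domain_eq_range_of_mem_graph_iff {R : E →ₗ.[𝕜] F} {Z : F →ₗ[𝕜] E}
    (hR : ∀ p : E × F, p ∈ R.graph ↔ Z p.2 = p.1) : R.domain = LinearMap.range Z := by
  ext x
  simp [mem_domain_iff, hR]

theorem graph_domRestrict_map_eq {R : E →ₗ.[𝕜] F} {Z : F →L[𝕜] E}
    (hZinj : Function.Injective Z) (hR : ∀ p : E × F, p ∈ R.graph ↔ Z p.2 = p.1)
    (K : Submodule 𝕜 F) :
    (R.domRestrict (K.map (Z : F →ₗ[𝕜] E))).graph =
      K.map ((Z : F →ₗ[𝕜] E).prod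
        ((LinearIsometryEquiv.refl 𝕜 F).toLinearEquiv : F →ₗ[𝕜] F)) := by
  ext ⟨x, y⟩
  rw [mem_graph_domRestrict_iff, Submodule.mem_map_prod_iff]
  simp only [hR, Submodule.mem_map, ContinuousLinearMap.coe_coe, LinearEquiv.coe_coe,
    LinearIsometryEquiv.coe_toLinearEquiv, LinearIsometryEquiv.coe_refl, id]
  constructor
  · rintro ⟨⟨a, ha, rfl⟩, hy⟩
    exact ⟨a, ha, rfl, (hZinj hy).symm⟩
  · rintro ⟨a, ha, rfl, rfl⟩
    exact ⟨⟨a, ha, rfl⟩, rfl⟩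

variable {S : E →ₗ.[𝕜] F} {K : Submodule 𝕜 G} {T : G →L[𝕜] E} {V : G ≃ₗᵢ[𝕜] F}

theorem exists_apply_eq_of_graph_eq
    (hS : S.graph = K.map ((T : G →ₗ[𝕜] E).prod (V.toLinearEquiv : G →ₗ[𝕜] F)))
    (x : S.domain) : ∃ a ∈ K, T a = x ∧ V a = S x :=
  Submodule.mem_map_prod_iff.1 (hS ▸ S.mem_graph x)

theorem domain_eq_map_of_graph_eq
    (hS : S.graph = K.map ((T : G →ₗ[𝕜] E).prod (V.toLinearEquiv : G →ₗ[𝕜] F))) :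
    S.domain = K.map (T : G →ₗ[𝕜] E) := by
  ext x
  rw [mem_domain_iff, Submodule.mem_map]
  simp only [hS, Submodule.mem_map_prod_iff]
  exact ⟨fun ⟨_, a, ha, hx, _⟩ => ⟨a, ha, hx⟩, fun ⟨a, ha, hx⟩ => ⟨V a, a, ha, hx, rfl⟩⟩

theorem apply_eq_of_graph_eq
    (hS : S.graph = K.map ((T : G →ₗ[𝕜] E).prod (V.toLinearEquiv : G →ₗ[𝕜] F)))
    (hT : Function.Injective T) {x : S.domain} {a : G} (ha : T a = x) : S x = V a := by
  obtain ⟨b, -, hb, hSx⟩ := exists_apply_eq_of_graph_eq hS x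
  rw [← hSx, hT (hb.trans ha.symm)]

theorem range_eq_map_of_graph_eq
    (hS : S.graph = K.map ((T : G →ₗ[𝕜] E).prod (V.toLinearEquiv : G →ₗ[𝕜] F))) :
    LinearMap.range S.toFun = K.map (V.toLinearEquiv : G →ₗ[𝕜] F) := by
  ext y
  simp only [LinearMap.mem_range, Submodule.mem_map]
  constructor
  · rintro ⟨x, rfl⟩
    obtain ⟨a, ha, -, hSx⟩ := exists_apply_eq_of_graph_eq hS x
    exact ⟨a, ha, hSx⟩
  · rintro ⟨a, ha, rfl⟩
    have hmem : (T a, V a) ∈ S.graph := hS ▸ Submodule.mem_map_prod_iff.2 ⟨a, ha, rfl, rfl⟩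
    obtain ⟨x, -, hSx⟩ := (mem_graph_iff S).1 hmem
    exact ⟨x, hSx⟩

theorem isClosed_of_graph_eq
    (hS : S.graph = K.map ((T : G →ₗ[𝕜] E).prod (V.toLinearEquiv : G →ₗ[𝕜] F)))
    (hK : _root_.IsClosed (K : Set G)) : S.IsClosed := by
  have hgraph : (S.graph : Set (E × F)) =
      {p | V.symm p.2 ∈ K} ∩ {p | T (V.symm p.2) = p.1} := by
    ext ⟨x, y⟩
    simp only [SetLike.mem_coe, hS, Submodule.mem_map_prod_iff, Set.mem_inter_iff,
      Set.mem_ofPred_eq]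
    constructor
    · rintro ⟨a, ha, rfl, rfl⟩
      simpa using ha
    · rintro ⟨hy, hx⟩
      exact ⟨V.symm y, hy, hx, by simp⟩
  show _root_.IsClosed (S.graph : Set (E × F))
  rw [hgraph]
  have hV : Continuous fun p : E × F => V.symm p.2 := V.symm.continuous.comp continuous_snd
  exact (hK.preimage hV).inter (isClosed_eq (T.continuous.comp hV) continuous_fst)

theorem exists_pos_mul_norm_le_of_graph_eq
    (hS : S.graph = K.map ((T : G →ₗ[𝕜] E).prod (V.toLinearEquiv : G →ₗ[𝕜] F))) :
    ∃ γ : ℝ, 0 < γ ∧ ∀ x : S.domain, γ * ‖(x : E)‖ ≤ ‖S x‖ := by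
  refine ⟨(‖T‖ + 1)⁻¹, by positivity, fun x => ?_⟩
  obtain ⟨a, -, hx, hSx⟩ := exists_apply_eq_of_graph_eq hS x
  rw [← hx, ← hSx, LinearIsometryEquiv.norm_map, inv_mul_le_iff₀ (by positivity)]
  calc ‖T a‖ ≤ ‖T‖ * ‖a‖ := T.le_opNorm a
    _ ≤ (‖T‖ + 1) * ‖a‖ := by gcongr; linarith

theorem adjoint_ker_eq_image_orthogonal_of_graph_eq [CompleteSpace E]
    (hS : S.graph = K.map ((T : G →ₗ[𝕜] E).prod (V.toLinearEquiv : G →ₗ[𝕜] F)))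
    (hdense : Dense (S.domain : Set E)) :
    {y : F | (y, 0) ∈ S†.graph} = V '' Kᗮ := by
  rw [adjoint_ker_eq_orthogonal_range hdense, range_eq_map_of_graph_eq hS,
    ← Submodule.map_orthogonal_equiv, Submodule.map_coe]
  rfl

theorem isFormalAdjoint_of_graph_eq {G' : Type*} [NormedAddCommGroup G']
    [InnerProductSpace 𝕜 G'] {S' : F →ₗ.[𝕜] E} {K' : Submodule 𝕜 G'} {T' : G' →L[𝕜] F}
    {V' : G' ≃ₗᵢ[𝕜] E}
    (hS : S.graph = K.map ((T : G →ₗ[𝕜] E).prod (V.toLinearEquiv : G →ₗ[𝕜] F)))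
    (hS' : S'.graph = K'.map ((T' : G' →ₗ[𝕜] F).prod (V'.toLinearEquiv : G' →ₗ[𝕜] E)))
    (h : ∀ a ∈ K, ∀ b ∈ K', ⟪V a, T' b⟫_𝕜 = ⟪T a, V' b⟫_𝕜) : S.IsFormalAdjoint S' := by
  intro x y
  obtain ⟨a, ha, hx, hSx⟩ := exists_apply_eq_of_graph_eq hS x
  obtain ⟨b, hb, hy, hSy⟩ := exists_apply_eq_of_graph_eq hS' y
  rw [← hx, ← hSx, ← hy, ← hSy, h a ha b hb]

theorem norm_apply_eq_of_graph_eq {S' : E →ₗ.[𝕜] F} {V' : G ≃ₗᵢ[𝕜] F}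
    (hS : S.graph = K.map ((T : G →ₗ[𝕜] E).prod (V.toLinearEquiv : G →ₗ[𝕜] F)))
    (hS' : S'.graph = K.map ((T : G →ₗ[𝕜] E).prod (V'.toLinearEquiv : G →ₗ[𝕜] F)))
    (hT : Function.Injective T) {x : S.domain} {y : S'.domain} (hxy : (x : E) = y) :
    ‖S x‖ = ‖S' y‖ := by
  obtain ⟨a, -, hx, hSx⟩ := exists_apply_eq_of_graph_eq hS x
  rw [← hSx, apply_eq_of_graph_eq hS' hT (hx.trans hxy), LinearIsometryEquiv.norm_map,
    LinearIsometryEquiv.norm_map]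

end LinearPMap

theorem formallyNormal_of_le_adjoint {A B : H →ₗ.[ℂ] H} (hA : Dense (A.domain : Set H))
    (hdom : A.domain = B.domain) (hBA : B ≤ A†)
    (hnorm : ∀ (x : A.domain) (y : B.domain), (x : H) = y → ‖A x‖ = ‖B y‖) :
    FormallyNormal A := by
  have hle : A.domain ≤ (A†).domain := fun z hz => hBA.1 (hdom ▸ hz)
  refine ⟨hA, hle, fun x => ?_⟩
  have hxB : (x : H) ∈ B.domain := hdom ▸ x.2
  rw [hnorm x ⟨x, hxB⟩ rfl, hBA.2 (x := ⟨x, hxB⟩) (y := ⟨x, hle x.2⟩) rfl]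

section InverseOfBoundedOperator

variable {Z : H →L[ℂ] H} {W : H ≃ₗᵢ[ℂ] H}

theorem apply_comm_of_adjoint_eq_comp (hW : ∀ y, ContinuousLinearMap.adjoint Z y = Z (W y))
    (x : H) : W (Z x) = Z (W x) := by
  refine ext_inner_right ℂ fun y => ?_
  calc ⟪W (Z x), y⟫
    _ = ⟪Z x, W.symm y⟫ := by rw [← W.inner_map_map (Z x) (W.symm y), W.apply_symm_apply]
    _ = ⟪x, Z (W (W.symm y))⟫ := by rw [← ContinuousLinearMap.adjoint_inner_right, hW]
    _ = ⟪Z (W x), y⟫ := by rw [W.apply_symm_apply, ← hW, ContinuousLinearMap.adjoint_inner_left]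

theorem inner_symm_apply_left_eq (hW : ∀ y, ContinuousLinearMap.adjoint Z y = Z (W y))
    (u a : H) : ⟪W.symm u, Z a⟫ = ⟪Z u, a⟫ := by
  rw [← W.inner_map_map, W.apply_symm_apply, apply_comm_of_adjoint_eq_comp hW, ← hW,
    ContinuousLinearMap.adjoint_inner_right]

theorem range_adjoint_eq_range_of_adjoint_eq_comp
    (hW : ∀ y, ContinuousLinearMap.adjoint Z y = Z (W y)) :
    LinearMap.range (ContinuousLinearMap.adjoint Z : H →ₗ[ℂ] H) =
      LinearMap.range (Z : H →ₗ[ℂ] H) := by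
  ext x
  simp only [LinearMap.mem_range, ContinuousLinearMap.coe_coe, hW]
  exact ⟨fun ⟨y, hy⟩ => ⟨W y, hy⟩, fun ⟨y, hy⟩ => ⟨W.symm y, by rwa [W.apply_symm_apply]⟩⟩

theorem injective_adjoint_of_adjoint_eq_comp (hZinj : Function.Injective Z)
    (hW : ∀ y, ContinuousLinearMap.adjoint Z y = Z (W y)) :
    Function.Injective (ContinuousLinearMap.adjoint Z) := fun x y hxy => by
  simp only [hW] at hxy
  exact W.injective (hZinj hxy)

variable {R : H →ₗ.[ℂ] H}

theorem mem_adjoint_graph_of_mem_graph_iff (hZinj : Function.Injective Z)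
    (hR : ∀ p : H × H, p ∈ R.graph ↔ Z p.2 = p.1)
    (hW : ∀ y, ContinuousLinearMap.adjoint Z y = Z (W y)) (a : H) :
    (Z a, W.symm a) ∈ R†.graph := by
  have hRdense : Dense (R.domain : Set H) := by
    rw [domain_eq_range_of_mem_graph_iff (Z := (Z : H →ₗ[ℂ] H)) hR, ← Submodule.map_top]
    exact Z.dense_map_of_orthogonal_inf_range_adjoint_eq_bot ⊤
      (injective_adjoint_of_adjoint_eq_comp hZinj hW) (by simp)
  have hF : ∀ v : R.domain, ⟪W.symm a, (v : H)⟫ = ⟪Z a, R v⟫ := fun v => by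
    rw [← inner_symm_apply_left_eq hW, (hR (v, R v)).1 (R.mem_graph v)]
  exact (mem_graph_iff _).2
    ⟨⟨Z a, mem_adjoint_domain_of_exists _ ⟨_, hF⟩⟩, rfl, adjoint_apply_eq hRdense _ hF⟩

theorem graph_adjoint_domRestrict_map_eq (hZinj : Function.Injective Z)
    (hR : ∀ p : H × H, p ∈ R.graph ↔ Z p.2 = p.1)
    (hW : ∀ y, ContinuousLinearMap.adjoint Z y = Z (W y)) (K : Submodule ℂ H) :
    ((R†).domRestrict (K.map (Z : H →ₗ[ℂ] H))).graph =
      K.map ((Z : H →ₗ[ℂ] H).prod (W.symm.toLinearEquiv : H →ₗ[ℂ] H)) := by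
  ext ⟨x, y⟩
  rw [mem_graph_domRestrict_iff, Submodule.mem_map_prod_iff]
  simp only [Submodule.mem_map, ContinuousLinearMap.coe_coe, LinearEquiv.coe_coe,
    LinearIsometryEquiv.coe_toLinearEquiv]
  constructor
  · rintro ⟨⟨a, ha, rfl⟩, hy⟩
    exact ⟨a, ha, rfl,
      ((R†).mem_graph_snd_inj (mem_adjoint_graph_of_mem_graph_iff hZinj hR hW a) hy rfl)⟩
  · rintro ⟨a, ha, rfl, rfl⟩
    exact ⟨⟨a, ha, rfl⟩, mem_adjoint_graph_of_mem_graph_iff hZinj hR hW a⟩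

end InverseOfBoundedOperator

theorem inverse_construction_general (Z : H →L[ℂ] H)
    (hZinj : Function.Injective Z)
    (R : H →ₗ.[ℂ] H) (hR : ∀ p : H × H, p ∈ R.graph ↔ Z p.2 = p.1)
    (𝒰 : Submodule ℂ H) [CompleteSpace ↥𝒰]
    (h𝒰 : 𝒰 ⊓ R.domain = ⊥)
    (W : H ≃ₗᵢ[ℂ] H) (hW : ∀ y : H, ContinuousLinearMap.adjoint Z y = Z (W y))
    (D : Submodule ℂ H)
    (hD : D = LinearMap.range
      ((Z.comp (ContinuousLinearMap.id ℂ H -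
        𝒰.subtypeL.comp 𝒰.orthogonalProjectionOnto) : H →L[ℂ] H) : H →ₗ[ℂ] H))
    (Aop Bop : H →ₗ.[ℂ] H)
    (hAop : Aop = R.domRestrict D) (hBop : Bop = (R†).domRestrict D) :
    Dense (Aop.domain : Set H) ∧ Dense (Bop.domain : Set H) ∧
      Aop.IsClosed ∧ Bop.IsClosed ∧
      FormallyNormal Aop ∧ FormallyNormal Bop ∧
      Aop ≤ Bop† ∧ Bop ≤ Aop† ∧
      (∃ γ : ℝ, 0 < γ ∧ ∀ x : Aop.domain, γ * ‖(x : H)‖ ≤ ‖Aop x‖) ∧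
      (∃ γ : ℝ, 0 < γ ∧ ∀ x : Bop.domain, γ * ‖(x : H)‖ ≤ ‖Bop x‖) ∧
      {x : H | (x, (0 : H)) ∈ (Aop†).graph} = (𝒰 : Set H) ∧
      {x : H | (x, (0 : H)) ∈ (Bop†).graph} = ⇑W.symm '' (𝒰 : Set H) := by
  have hD' : D = 𝒰ᗮ.map (Z : H →ₗ[ℂ] H) := hD.trans (Z.range_comp_id_sub_starProjection 𝒰)
  have hA := graph_domRestrict_map_eq hZinj hR 𝒰ᗮ
  have hB := graph_adjoint_domRestrict_map_eq hZinj hR hW 𝒰ᗮ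
  rw [← hD', ← hAop] at hA
  rw [← hD', ← hBop] at hB
  have hdense : Dense (𝒰ᗮ.map (Z : H →ₗ[ℂ] H) : Set H) := by
    refine Z.dense_map_of_orthogonal_inf_range_adjoint_eq_bot _
      (injective_adjoint_of_adjoint_eq_comp hZinj hW) ?_
    rwa [Submodule.orthogonal_orthogonal, range_adjoint_eq_range_of_adjoint_eq_comp hW,
      ← domain_eq_range_of_mem_graph_iff hR]
  have hAdom := domain_eq_map_of_graph_eq hA
  have hBdom := domain_eq_map_of_graph_eq hB
  have hAdense : Dense (Aop.domain : Set H) := hAdom ▸ hdense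
  have hBdense : Dense (Bop.domain : Set H) := hBdom ▸ hdense
  have hBA : Bop.IsFormalAdjoint Aop :=
    isFormalAdjoint_of_graph_eq hB hA fun a _ b _ => inner_symm_apply_left_eq hW a b
  refine ⟨hAdense, hBdense, isClosed_of_graph_eq hA 𝒰.isClosed_orthogonal,
    isClosed_of_graph_eq hB 𝒰.isClosed_orthogonal,
    formallyNormal_of_le_adjoint hAdense (hAdom.trans hBdom.symm) (hBA.symm.le_adjoint hAdense)
      fun _ _ => norm_apply_eq_of_graph_eq hA hB hZinj,
    formallyNormal_of_le_adjoint hBdense (hBdom.trans hAdom.symm) (hBA.le_adjoint hBdense)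
      fun _ _ => norm_apply_eq_of_graph_eq hB hA hZinj,
    hBA.le_adjoint hBdense, hBA.symm.le_adjoint hAdense,
    exists_pos_mul_norm_le_of_graph_eq hA, exists_pos_mul_norm_le_of_graph_eq hB, ?_, ?_⟩
  · rw [adjoint_ker_eq_image_orthogonal_of_graph_eq hA hAdense, Submodule.orthogonal_orthogonal]
    exact Set.image_id _
  · rw [adjoint_ker_eq_image_orthogonal_of_graph_eq hB hBdense, Submodule.orthogonal_orthogonal]

/-- Let `Z` be a bounded injective normal operator whose inverse `R := Z⁻¹`
is unbounded, `𝒰` a closed subspace with `𝒰 ∩ D(R) = {0}`, `P` the orthogonal projection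
onto `𝒰`, and `D(A) = D(B) := Z(I − P)H`, `A := R↾D(A)`, `B := R*↾D(B)`. Then `A`, `B`
are densely defined closed formally normal operators forming an adjoint pair, `0` is a
regular point for both, and `N(A*) = 𝒰`, `N(B*) = W*𝒰`, where `W` is the unitary with
`WR* = R` (equivalently `Z* = Z∘W`). -/
theorem inverse_construction (Z : H →L[ℂ] H) (hZn : IsStarNormal Z)
    (hZinj : Function.Injective Z)
    (R : H →ₗ.[ℂ] H) (hR : ∀ p : H × H, p ∈ R.graph ↔ Z p.2 = p.1)
    (hRunbdd : (R.domain : Set H) ≠ Set.univ)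
    (𝒰 : Submodule ℂ H) [CompleteSpace ↥𝒰] (h𝒰closed : IsClosed (𝒰 : Set H))
    (h𝒰 : 𝒰 ⊓ R.domain = ⊥) (h𝒰ne : 𝒰 ≠ ⊥)
    (W : H ≃ₗᵢ[ℂ] H) (hW : ∀ y : H, ContinuousLinearMap.adjoint Z y = Z (W y))
    (D : Submodule ℂ H)
    (hD : D = LinearMap.range
      ((Z.comp (ContinuousLinearMap.id ℂ H -
        𝒰.subtypeL.comp 𝒰.orthogonalProjectionOnto) : H →L[ℂ] H) : H →ₗ[ℂ] H))
    (Aop Bop : H →ₗ.[ℂ] H)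
    (hAop : Aop = R.domRestrict D) (hBop : Bop = (R†).domRestrict D) :
    Dense (Aop.domain : Set H) ∧ Dense (Bop.domain : Set H) ∧
      Aop.IsClosed ∧ Bop.IsClosed ∧
      FormallyNormal Aop ∧ FormallyNormal Bop ∧
      Aop ≤ Bop† ∧ Bop ≤ Aop† ∧
      (∃ γ : ℝ, 0 < γ ∧ ∀ x : Aop.domain, γ * ‖(x : H)‖ ≤ ‖Aop x‖) ∧
      (∃ γ : ℝ, 0 < γ ∧ ∀ x : Bop.domain, γ * ‖(x : H)‖ ≤ ‖Bop x‖) ∧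
      {x : H | (x, (0 : H)) ∈ (Aop†).graph} = (𝒰 : Set H) ∧
      {x : H | (x, (0 : H)) ∈ (Bop†).graph} = ⇑W.symm '' (𝒰 : Set H) :=
  inverse_construction_general Z hZinj R hR 𝒰 h𝒰 W hW D hD Aop Bop hAop hBop
end

section
/- In the setting of the previous statement, D(A) = Z(I − P)H is dense in H: if x ⟂ Z(I−P)H then Z*x ∈ PH = U, but Z*x ∈ D(R), so by U ∩ D(R) = {0} we get Z*x = 0 and hence x = 0. -/
/-!
If `x ⟂ Z(I − P)H` then `(I − P)Z*x = 0`, so `Z*x ∈ 𝒰`. Normality gives `‖Z*y‖ = ‖Zy‖`,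
so `Z*y ↦ Zy` extends to a bounded `V` with `VZ* = Z`; hence `Z* = ZV*` and
`Z*x ∈ range Z`. Thus `Z*x ∈ 𝒰 ⊓ range Z = ⊥`, and `Zx = 0` by normality again.
-/

open ContinuousLinearMap

namespace ContinuousLinearMap

variable {𝕜 E F G : Type*} [RCLike 𝕜]
  [NormedAddCommGroup E] [InnerProductSpace 𝕜 E] [CompleteSpace E]
  [NormedAddCommGroup F] [InnerProductSpace 𝕜 F] [CompleteSpace F]
  [NormedAddCommGroup G] [InnerProductSpace 𝕜 G] [CompleteSpace G]

theorem denseRange_iff_ker_adjoint_eq_bot (T : E →L[𝕜] F) :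
    DenseRange T ↔ (adjoint T).ker = ⊥ := by
  rw [← orthogonal_range, ← Submodule.topologicalClosure_eq_top_iff,
    ← Submodule.dense_iff_topologicalClosure_eq_top]
  rfl

/-- Douglas' factorization lemma, dense-range case. -/
theorem range_adjoint_le_range_adjoint_of_norm_le (T : E →L[𝕜] G) (S : E →L[𝕜] F)
    (hS : DenseRange S) {C : ℝ} (h : ∀ x, ‖T x‖ ≤ C * ‖S x‖) :
    (adjoint T).range ≤ (adjoint S).range := by
  set V : F →L[𝕜] G := (T : E →ₗ[𝕜] G).extendOfNorm (S : E →ₗ[𝕜] F)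
  have hVS : V ∘L S = T := ext fun x ↦ LinearMap.extendOfNorm_eq hS ⟨C, h⟩ x
  rintro _ ⟨y, rfl⟩
  refine ⟨adjoint V y, ?_⟩
  rw [← hVS, adjoint_comp]
  rfl

end ContinuousLinearMap

theorem IsStarNormal.range_adjoint_le_range {𝕜 E : Type*} [RCLike 𝕜] [NormedAddCommGroup E]
    [InnerProductSpace 𝕜 E] [CompleteSpace E] {Z : E →L[𝕜] E} (hZ : IsStarNormal Z)
    (hZinj : Function.Injective Z) : (adjoint Z).range ≤ Z.range := by
  have hdense : DenseRange (adjoint Z) := by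
    rw [denseRange_iff_ker_adjoint_eq_bot, adjoint_adjoint, LinearMap.ker_eq_bot]
    exact hZinj
  simpa using range_adjoint_le_range_adjoint_of_norm_le Z (adjoint Z) hdense (C := 1)
    fun x ↦ by rw [one_mul, isStarNormal_iff_norm_eq_adjoint.mp hZ]

variable {H : Type*} [NormedAddCommGroup H] [InnerProductSpace ℂ H] [CompleteSpace H]

theorem range_Z_one_sub_P_dense_general (Z : H →L[ℂ] H) (hZn : IsStarNormal Z)
    (hZinj : Function.Injective Z)
    (𝒰 : Submodule ℂ H) [CompleteSpace ↥𝒰]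
    (h𝒰 : 𝒰 ⊓ LinearMap.range (Z : H →ₗ[ℂ] H) = ⊥) :
    Dense ((LinearMap.range
      ((Z.comp (ContinuousLinearMap.id ℂ H -
        𝒰.subtypeL.comp 𝒰.orthogonalProjectionOnto) : H →L[ℂ] H) : H →ₗ[ℂ] H) : Set H)) := by
  rw [LinearMap.coe_range, coe_coe, ← DenseRange, denseRange_iff_ker_adjoint_eq_bot,
    Submodule.eq_bot_iff]
  intro x hx
  have hsa :
      IsSelfAdjoint (ContinuousLinearMap.id ℂ H - 𝒰.subtypeL ∘L 𝒰.orthogonalProjectionOnto) :=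
    (IsSelfAdjoint.one _).sub (isSelfAdjoint_starProjection 𝒰)
  have hmem𝒰 : adjoint Z x ∈ 𝒰 := by
    rw [LinearMap.mem_ker, coe_coe, adjoint_comp, comp_apply, hsa.adjoint_eq, sub_apply,
      sub_eq_zero] at hx
    exact 𝒰.starProjection_eq_self_iff.mp hx.symm
  have hmemR : adjoint Z x ∈ LinearMap.range (Z : H →ₗ[ℂ] H) :=
    hZn.range_adjoint_le_range hZinj ⟨x, rfl⟩
  have hZx : adjoint Z x = 0 := by
    rw [← Submodule.mem_bot ℂ, ← h𝒰]
    exact ⟨hmem𝒰, hmemR⟩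
  exact hZinj (by simpa using (hZn.adjoint_apply_eq_zero_iff x).mp hZx)

/-- Let `Z` be a bounded injective normal operator on `H` (so `Z*` is also
injective and `range Z* = range Z = D(R)` for `R = Z⁻¹`), and let `𝒰` be a closed
subspace with `𝒰 ∩ range Z = {0}`, with orthogonal projection `P` onto `𝒰`. Then
`Z(I − P)H` is dense in `H`. -/
theorem range_Z_one_sub_P_dense (Z : H →L[ℂ] H) (hZn : IsStarNormal Z)
    (hZinj : Function.Injective Z)
    (𝒰 : Submodule ℂ H) [CompleteSpace ↥𝒰] (h𝒰closed : IsClosed (𝒰 : Set H))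
    (h𝒰 : 𝒰 ⊓ LinearMap.range (Z : H →ₗ[ℂ] H) = ⊥) :
    Dense ((LinearMap.range
      ((Z.comp (ContinuousLinearMap.id ℂ H -
        𝒰.subtypeL.comp 𝒰.orthogonalProjectionOnto) : H →L[ℂ] H) : H →ₗ[ℂ] H) : Set H)) :=
  range_Z_one_sub_P_dense_general Z hZn hZinj 𝒰 h𝒰
end
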